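/- Let S = I_{nK} − ρᵀ ⊗ W with W ∈ ℝ^{n×n} having zero diagonal, Σ_e ∈ ℝ^{K×K} symmetric positive definite, and Ω = Sᵀ(Σ_e^{-1} ⊗ I_n)S. Then the diagonal of Ω equals the diagonal of (Σ_e^{-1} ⊗ I_n) + (ρ Σ_e^{-1} ρᵀ) ⊗ (Wᵀ W) restricted to diagonal entries; that is, diag(Ω) = diag(Σ_e^{-1}) ⊗ I_n + diag(ρ Σ_e^{-1} ρᵀ) ⊗ diag(Wᵀ W). -/

import Mathlib

/-!
Expanding `(1 - A)ᵀ M (1 - A)` with `A = ρᵀ ⊗ W` and `M = Σ⁻¹ ⊗ I` leaves `M + AᵀMA`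
plus the cross terms `AᵀM = (ρΣ⁻¹) ⊗ Wᵀ` and `MA = (Σ⁻¹ρᵀ) ⊗ W`. A Kronecker product
`X ⊗ W` has diagonal entries `X k k * W i i`, so both cross terms vanish on the diagonal
when `W` does, while the mixed-product rule gives `AᵀMA = (ρΣ⁻¹ρᵀ) ⊗ (WᵀW)`.
-/

open Matrix
open scoped Kronecker

namespace Matrix

variable {R ι κ ν : Type*} [CommRing R]

theorem kronecker_apply_self_eq_zero {α : Type*} [MulZeroClass α] (X : Matrix κ κ α)
    {W : Matrix ν ν α}
    (hW : ∀ i, W i i = 0) (p : κ × ν) : (X ⊗ₖ W) p p = 0 := by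
  simp [hW]

theorem one_sub_transpose_mul_mul_one_sub_apply_self [Fintype ι] [DecidableEq ι]
    (A M : Matrix ι ι R) (p : ι) (hAM : (Aᵀ * M) p p = 0) (hMA : (M * A) p p = 0) :
    ((1 - A)ᵀ * M * (1 - A) : Matrix ι ι R) p p = M p p + (Aᵀ * M * A) p p := by
  have hexpand : (1 - A)ᵀ * M * (1 - A) = M - Aᵀ * M - M * A + Aᵀ * M * A := by
    rw [transpose_sub, transpose_one]
    noncomm_ring
  rw [hexpand, add_apply, sub_apply, sub_apply, hAM, hMA, sub_zero, sub_zero]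

variable [Fintype κ] [Fintype ν] [DecidableEq ν]

theorem kronecker_transpose_mul_kronecker_one (B C : Matrix κ κ R) (W : Matrix ν ν R) :
    (B ⊗ₖ W)ᵀ * (C ⊗ₖ (1 : Matrix ν ν R)) = (Bᵀ * C) ⊗ₖ Wᵀ := by
  rw [← kroneckerMap_transpose, ← mul_kronecker_mul, Matrix.mul_one]

theorem kronecker_one_mul_kronecker (B C : Matrix κ κ R) (W : Matrix ν ν R) :
    (C ⊗ₖ (1 : Matrix ν ν R)) * (B ⊗ₖ W) = (C * B) ⊗ₖ W := by
  rw [← mul_kronecker_mul, Matrix.one_mul]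

theorem kronecker_transpose_mul_kronecker_one_mul_kronecker
    (B C : Matrix κ κ R) (W : Matrix ν ν R) :
    (B ⊗ₖ W)ᵀ * (C ⊗ₖ (1 : Matrix ν ν R)) * (B ⊗ₖ W) = (Bᵀ * C * B) ⊗ₖ (Wᵀ * W) := by
  rw [kronecker_transpose_mul_kronecker_one, ← mul_kronecker_mul]

end Matrix

theorem diagonal_of_Omega_for_zero_diagonal_W_general
    (n K : ℕ) (W : Matrix (Fin n) (Fin n) ℝ) (hW : ∀ i, W i i = 0)
    (ρ : Matrix (Fin K) (Fin K) ℝ)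
    (Se : Matrix (Fin K) (Fin K) ℝ) :
    ∀ p : Fin K × Fin n,
      (((1 : Matrix (Fin K × Fin n) (Fin K × Fin n) ℝ) - ρ.transpose ⊗ₖ W).transpose *
        (Se⁻¹ ⊗ₖ (1 : Matrix (Fin n) (Fin n) ℝ)) *
        ((1 : Matrix (Fin K × Fin n) (Fin K × Fin n) ℝ) - ρ.transpose ⊗ₖ W)) p p =
      ((Se⁻¹ ⊗ₖ (1 : Matrix (Fin n) (Fin n) ℝ)) +
        ((ρ * Se⁻¹ * ρ.transpose) ⊗ₖ (W.transpose * W))) p p := by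
  intro p
  have hcross_left : ((ρᵀ ⊗ₖ W)ᵀ * (Se⁻¹ ⊗ₖ (1 : Matrix (Fin n) (Fin n) ℝ))) p p = 0 := by
    rw [kronecker_transpose_mul_kronecker_one]
    exact kronecker_apply_self_eq_zero _ (fun i ↦ hW i) p
  have hcross_right : ((Se⁻¹ ⊗ₖ (1 : Matrix (Fin n) (Fin n) ℝ)) * (ρᵀ ⊗ₖ W)) p p = 0 := by
    rw [kronecker_one_mul_kronecker]
    exact kronecker_apply_self_eq_zero _ hW p
  rw [one_sub_transpose_mul_mul_one_sub_apply_self _ _ p hcross_left hcross_right,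
    kronecker_transpose_mul_kronecker_one_mul_kronecker, transpose_transpose, Matrix.add_apply]

theorem diagonal_of_Omega_for_zero_diagonal_W
    (n K : ℕ) (W : Matrix (Fin n) (Fin n) ℝ) (hW : ∀ i, W i i = 0)
    (ρ : Matrix (Fin K) (Fin K) ℝ)
    (Se : Matrix (Fin K) (Fin K) ℝ) (hSe : Se.PosDef) :
    ∀ p : Fin K × Fin n,
      (((1 : Matrix (Fin K × Fin n) (Fin K × Fin n) ℝ) - ρ.transpose ⊗ₖ W).transpose *
        (Se⁻¹ ⊗ₖ (1 : Matrix (Fin n) (Fin n) ℝ)) *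
        ((1 : Matrix (Fin K × Fin n) (Fin K × Fin n) ℝ) - ρ.transpose ⊗ₖ W)) p p =
      ((Se⁻¹ ⊗ₖ (1 : Matrix (Fin n) (Fin n) ℝ)) +
        ((ρ * Se⁻¹ * ρ.transpose) ⊗ₖ (W.transpose * W))) p p :=
  diagonal_of_Omega_for_zero_diagonal_W_general n K W hW ρ Se
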